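/- Let W be a word over the alphabet {a,b,c,d}. If N^1_{b,c}(W) is odd, then, modulo 2, N^{0,0}_{b,c}(W) = N^{1,1}_{b,c}(W) and N^{1,1}_{b,c}(W) ≠ N^{1,0}_{b,c}(W). -/
import Mathlib

/-!
Words over the alphabet `{a, b, c, d}`, encoded as lists over `Fin 4`
(`0 = a`, `1 = b`, `2 = c`, `3 = d`).
-/

/-- Is the letter one of the `{b,c}`-letters? -/
def isBC (x : Fin 4) : Bool := decide (x = 1 ∨ x = 2)

/-- The parity (number modulo 2) of occurrences of the letter `a` before position `i`
in the word `W`. -/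
def aParity (W : List (Fin 4)) (i : ℕ) : ℕ := (W.take i).count 0 % 2

/-- The number of `{b,c}`-letters of parity `p` occurring before position `i` in `W`. -/
def NbcBefore (W : List (Fin 4)) (p : ℕ) (i : ℕ) : ℕ :=
  ((Finset.range i).filter fun j => isBC (W.getD j 0) = true ∧ aParity W j = p).card

/-- `N^p_{b,c}(W)`: the number of `{b,c}`-letters of parity `p` in `W`. -/
def Nbc (W : List (Fin 4)) (p : ℕ) : ℕ := NbcBefore W p W.length

/-- `N^{p,q}_{b,c}(W)`: the number of `{b,c}`-letters `ℓ` of parity `p` in `W` such that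
the number of `{b,c}`-letters of parity `p̄` appearing before `ℓ` in `W` has parity `q`. -/
def Nbc2 (W : List (Fin 4)) (p q : ℕ) : ℕ :=
  ((Finset.range W.length).filter fun i =>
    isBC (W.getD i 0) = true ∧ aParity W i = p ∧ NbcBefore W (1 - p) i % 2 = q).card

lemma aParity_append (W : List (Fin 4)) (x : Fin 4) (i : ℕ) (h : i ≤ W.length) :
    aParity (W ++ [x]) i = aParity W i := by
  unfold aParity
  rw [List.take_append_of_le_length h]

lemma getD_append' (W : List (Fin 4)) (x : Fin 4) (j : ℕ) (h : j < W.length) :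
    (W ++ [x]).getD j 0 = W.getD j 0 :=
  List.getD_append _ _ _ _ h

lemma getD_last (W : List (Fin 4)) (x : Fin 4) :
    (W ++ [x]).getD W.length 0 = x := by
  simp [List.getD]

lemma NbcBefore_append (W : List (Fin 4)) (x : Fin 4) (p i : ℕ) (h : i ≤ W.length) :
    NbcBefore (W ++ [x]) p i = NbcBefore W p i := by
  unfold NbcBefore
  congr 1
  apply Finset.filter_congr
  intro j hj
  have hjW : j < W.length := lt_of_lt_of_le (Finset.mem_range.mp hj) h
  rw [getD_append' W x j hjW, aParity_append W x j hjW.le]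

lemma Nbc_append (W : List (Fin 4)) (x : Fin 4) (p : ℕ) :
    Nbc (W ++ [x]) p = Nbc W p +
      (if isBC x = true ∧ W.count 0 % 2 = p then 1 else 0) := by
  unfold Nbc
  rw [show (W ++ [x]).length = W.length + 1 by simp]
  unfold NbcBefore
  rw [Finset.range_add_one, Finset.filter_insert]
  have h1 : (W ++ [x]).getD W.length 0 = x := getD_last W x
  have h2 : aParity (W ++ [x]) W.length = W.count 0 % 2 := by
    unfold aParity
    rw [List.take_append_of_le_length le_rfl, List.take_length]
  have h3 : ((Finset.range W.length).filter fun j =>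
      isBC ((W ++ [x]).getD j 0) = true ∧ aParity (W ++ [x]) j = p).card
      = ((Finset.range W.length).filter fun j =>
      isBC (W.getD j 0) = true ∧ aParity W j = p).card := by
    congr 1
    apply Finset.filter_congr
    intro j hj
    have hjW : j < W.length := Finset.mem_range.mp hj
    rw [getD_append' W x j hjW, aParity_append W x j hjW.le]
  rw [h1, h2]
  split_ifs with hc
  · rw [Finset.card_insert_of_notMem (by simp), h3]
  · rw [h3, Nat.add_zero]

lemma Nbc2_append (W : List (Fin 4)) (x : Fin 4) (p q : ℕ) :
    Nbc2 (W ++ [x]) p q = Nbc2 W p q +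
      (if isBC x = true ∧ W.count 0 % 2 = p ∧ Nbc W (1 - p) % 2 = q then 1 else 0) := by
  unfold Nbc2
  rw [show (W ++ [x]).length = W.length + 1 by simp]
  rw [Finset.range_add_one, Finset.filter_insert]
  have h1 : (W ++ [x]).getD W.length 0 = x := getD_last W x
  have h2 : aParity (W ++ [x]) W.length = W.count 0 % 2 := by
    unfold aParity
    rw [List.take_append_of_le_length le_rfl, List.take_length]
  have h4 : NbcBefore (W ++ [x]) (1 - p) W.length = Nbc W (1 - p) := by
    rw [NbcBefore_append W x _ _ le_rfl]; rfl
  have h3 : ((Finset.range W.length).filter fun i =>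
      isBC ((W ++ [x]).getD i 0) = true ∧ aParity (W ++ [x]) i = p ∧
        NbcBefore (W ++ [x]) (1 - p) i % 2 = q).card
      = ((Finset.range W.length).filter fun i =>
      isBC (W.getD i 0) = true ∧ aParity W i = p ∧
        NbcBefore W (1 - p) i % 2 = q).card := by
    congr 1
    apply Finset.filter_congr
    intro j hj
    have hjW : j < W.length := Finset.mem_range.mp hj
    rw [getD_append' W x j hjW, aParity_append W x j hjW.le,
      NbcBefore_append W x _ j hjW.le]
  rw [h1, h2, h4]
  split_ifs with hc
  · rw [Finset.card_insert_of_notMem (by simp), h3]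
  · rw [h3, Nat.add_zero]

lemma modmul (n m : ℕ) : n * m % 2 = if n % 2 = 1 ∧ m % 2 = 1 then 1 else 0 := by
  rcases Nat.mod_two_eq_zero_or_one n with e | e <;>
    rcases Nat.mod_two_eq_zero_or_one m with f | f <;>
      simp [Nat.mul_mod, e, f]

lemma invariant (W : List (Fin 4)) :
    (Nbc2 W 0 0 + Nbc2 W 1 1 + Nbc W 0 * (Nbc W 1 + 1)) % 2 = 0 ∧
      Nbc2 W 1 0 + Nbc2 W 1 1 = Nbc W 1 := by
  induction W using List.reverseRecOn with
  | nil => simp [Nbc2, Nbc, NbcBefore]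
  | append_singleton W x ih =>
    obtain ⟨h1, h2⟩ := ih
    rw [Nbc2_append, Nbc2_append, Nbc2_append, Nbc_append, Nbc_append]
    have M1 := modmul (Nbc W 0) (Nbc W 1 + 1)
    have M2 := modmul (Nbc W 0 + 1) (Nbc W 1 + 1)
    have M3 := modmul (Nbc W 0) (Nbc W 1 + 1 + 1)
    by_cases hx : isBC x = true
    · rcases Nat.mod_two_eq_zero_or_one (W.count 0) with ec | ec <;>
        rcases Nat.mod_two_eq_zero_or_one (Nbc W 0) with e0 | e0 <;>
        rcases Nat.mod_two_eq_zero_or_one (Nbc W 1) with e1 | e1 <;>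
        · simp [Nat.add_mod, e0, e1] at M1 M2 M3
          simp [hx, ec, e0, e1]
          omega
    · simp only [hx, false_and, if_false, Nat.add_zero]
      exact ⟨h1, h2⟩

/-- If `N¹_{b,c}(W)` is odd then `N^{0,0} = N^{1,1} ≠ N^{1,0}` mod 2. -/
theorem Nbc2_eq_of_odd_Nbc_one (W : List (Fin 4)) (h : Nbc W 1 % 2 = 1) :
    Nbc2 W 0 0 % 2 = Nbc2 W 1 1 % 2 ∧ Nbc2 W 1 1 % 2 ≠ Nbc2 W 1 0 % 2 := by
  obtain ⟨h1, h2⟩ := invariant W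
  have M := modmul (Nbc W 0) (Nbc W 1 + 1)
  rw [if_neg (by omega)] at M
  exact ⟨by omega, by omega⟩
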